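/- For the 334-type Hessenberg function h (h(1)=h(2)=3, h(i)=i+1 for 3 ≤ i ≤ n-1, h(n)=n), every h-permissible filling w of the one-row diagram which is not permissible for the Peterson Hessenberg function is exactly one of: (a) of the form w' 3 1 2 w'' where w' is a (possibly empty) decreasing staircase such that w'3 is a staircase and w'' is an increasing sequence of staircases, or (b) of the form 2 w' 3 1 w'' with w', w'' as in (a). -/

import Mathlib

open Equiv Finset

open Fin.NatCast in
/-- The simple transposition `s_i = (i, i+1)` (1-indexed letters), as a
permutation of `Fin n` (0-indexed letters `i-1`, `i`). -/
def sT (n : ℕ) [NeZero n] (i : ℕ) : Equiv.Perm (Fin n) :=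
  Equiv.swap ((i - 1 : ℕ) : Fin n) ((i : ℕ) : Fin n)

/-- The Bruhat length of a permutation: its number of inversions. -/
def lenP (n : ℕ) (w : Equiv.Perm (Fin n)) : ℕ :=
  (Finset.univ.filter (fun p : Fin n × Fin n => p.1 < p.2 ∧ w p.2 < w p.1)).card

/-- Bruhat order on `S_n`: the reflexive-transitive closure of
"multiply on the right by a transposition and increase length". -/
def bruhatLE (n : ℕ) (u w : Equiv.Perm (Fin n)) : Prop :=
  Relation.ReflTransGen
    (fun a b => (∃ i j : Fin n, i ≠ j ∧ b = a * Equiv.swap i j) ∧ lenP n a < lenP n b) u w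

/-- `u_ℓ(x) = s_{ℓ-1} s_{ℓ-2} ⋯ s_{ℓ-x_ℓ}` (identity if `x_ℓ = 0`). -/
def uPerm (n : ℕ) [NeZero n] (ℓ m : ℕ) : Equiv.Perm (Fin n) :=
  ((List.range m).map (fun t => sT n (ℓ - 1 - t))).prod

/-- `ω(x) = u_2(x) u_3(x) ⋯ u_n(x)`. -/
def omegaPerm (n : ℕ) [NeZero n] (x : ℕ → ℕ) : Equiv.Perm (Fin n) :=
  ((List.range (n - 1)).map (fun k => uPerm n (k + 2) (x (k + 2)))).prod

/-- A permutation `w ∈ S_n`, viewed as a filling of the one-row diagram with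
`n` boxes via its one-line notation `(w(1), …, w(n))` (letters `1, …, n`
encoded as `Fin n`), is `h`-permissible if every horizontal adjacency with `k`
immediately left of `j` satisfies `k ≤ h(j)`. -/
def IsPermissible (n : ℕ) (h : ℕ → ℕ) (w : Equiv.Perm (Fin n)) : Prop :=
  ∀ i : Fin n, ∀ hi : (i : ℕ) + 1 < n,
    (w i : ℕ) + 1 ≤ h ((w ⟨(i : ℕ) + 1, hi⟩ : ℕ) + 1)

/-- The 334-type Hessenberg function: `h(1) = h(2) = 3`, `h(i) = i + 1` for
`3 ≤ i ≤ n - 1`, and `h(n) = n`. -/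
def h334 (n i : ℕ) : ℕ := if i ≤ 2 then 3 else min (i + 1) n

/-- The Peterson Hessenberg function: `h'(i) = i + 1` for `i ≤ n - 1`,
`h'(n) = n`. -/
def hPet (n i : ℕ) : ℕ := min (i + 1) n

/-- The one-line notation of `w ∈ S_n`, as a list of the letters `1, …, n`. -/
def oneLine (n : ℕ) (w : Equiv.Perm (Fin n)) : List ℕ :=
  List.ofFn fun i : Fin n => (w i : ℕ) + 1

/-- A decreasing staircase: each entry is exactly one less than the previous. -/
def IsDecStair (l : List ℕ) : Prop := List.Chain' (fun a b => b + 1 = a) l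

/-- An increasing sequence of (nonempty) decreasing staircases: a concatenation
of decreasing staircase blocks in which every entry of each block is smaller
than every entry of every later block. -/
def IsIncStaircases (l : List ℕ) : Prop :=
  ∃ blocks : List (List ℕ), l = blocks.flatten ∧
    (∀ b ∈ blocks, b ≠ [] ∧ IsDecStair b) ∧
    List.Pairwise (fun b1 b2 => ∀ a ∈ b1, ∀ c ∈ b2, a < c) blocks

/-! For letters `k, j ∈ [1, n]`, `k ≤ h334 n j` means `k ≤ j + 1` or `(k, j) = (3, 1)`, and
`k ≤ hPet n j` means `k ≤ j + 1`. So the one-line word of `w` contains the adjacency `3 1`,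
and every other adjacency descends by at most one. In a repetition-free word with that property a
staircase occupies an interval of values, and any later letter is either above that interval or
is its continuation; hence the word is an increasing sequence of staircases, and a prefix whose
letters all exceed its last letter is a single staircase. Finally `2` can only be preceded by `1`,
which follows the `3`, so `2` either starts the word or comes right after `3 1`. -/

open List

lemma IsDecStair.mem_cons_iff {a x : ℕ} {s : List ℕ} (h : IsDecStair (a :: s)) :
    x ∈ a :: s ↔ x ≤ a ∧ a ≤ x + s.length := by
  induction s generalizing a with
  | nil => simp only [List.mem_singleton, length_nil]; omega
  | cons b s ih =>
    obtain ⟨rfl, hs⟩ := isChain_cons_cons.1 h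
    rw [List.mem_cons, ih hs, length_cons]
    omega

lemma IsIncStaircases.cons_of_forall_lt {a : ℕ} {l : List ℕ} (hl : IsIncStaircases l)
    (ha : ∀ x ∈ l, a < x) : IsIncStaircases (a :: l) := by
  obtain ⟨B, rfl, hB, hpw⟩ := hl
  refine ⟨[a] :: B, rfl, forall_mem_cons.2 ⟨⟨cons_ne_nil _ _, isChain_singleton a⟩, hB⟩,
    pairwise_cons.2 ⟨fun Y hY x hx c hc => ?_, hpw⟩⟩
  rw [List.mem_singleton.1 hx]
  exact ha c (mem_flatten.2 ⟨Y, hY, hc⟩)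

theorem isIncStaircases_of_isChain {l : List ℕ} (hnd : l.Nodup)
    (hl : l.IsChain (fun a b => a ≤ b + 1)) : IsIncStaircases l := by
  induction l with
  | nil => exact ⟨[], rfl, by simp, Pairwise.nil⟩
  | cons a l ih =>
    obtain ⟨ha, hnd⟩ := nodup_cons.1 hnd
    obtain ⟨B, rfl, hB, hpw⟩ := ih hnd hl.tail
    rcases B with _ | ⟨_ | ⟨b, s⟩, B⟩
    · exact IsIncStaircases.cons_of_forall_lt ⟨[], rfl, hB, hpw⟩ (by simp)
    · exact absurd rfl (hB [] mem_cons_self).1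
    have hstair : IsDecStair (b :: s) := (hB _ mem_cons_self).2
    have hbB : ∀ Y ∈ B, ∀ c ∈ Y, b < c :=
      fun Y hY => (pairwise_cons.1 hpw).1 Y hY b mem_cons_self
    have hle : a ≤ b + 1 := by
      simp only [flatten_cons, cons_append, isChain_cons_cons] at hl
      exact hl.1
    by_cases hsucc : a = b + 1
    · refine ⟨(a :: b :: s) :: B, rfl, forall_mem_cons.2 ⟨⟨cons_ne_nil _ _,
        isChain_cons_cons.2 ⟨hsucc.symm, hstair⟩⟩, fun Y hY => hB Y (mem_cons_of_mem _ hY)⟩,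
        pairwise_cons.2 ⟨fun Y hY x hx c hc => ?_, (pairwise_cons.1 hpw).2⟩⟩
      rcases List.mem_cons.1 hx with rfl | hx
      · have hca : c ≠ x := fun h => ha (mem_flatten.2 ⟨Y, mem_cons_of_mem _ hY, h ▸ hc⟩)
        have := hbB Y hY c hc
        omega
      · exact (pairwise_cons.1 hpw).1 Y hY x hx c hc
    · -- `a` lies below the interval of values filled by the first staircase
      have hgap : a + s.length < b := by
        have := mt hstair.mem_cons_iff.2 fun h => ha (mem_flatten.2 ⟨_, mem_cons_self, h⟩)
        omega
      refine IsIncStaircases.cons_of_forall_lt ⟨_, rfl, hB, hpw⟩ fun x hx => ?_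
      obtain ⟨Y, hY, hxY⟩ := mem_flatten.1 hx
      rcases List.mem_cons.1 hY with rfl | hY
      · have := hstair.mem_cons_iff.1 hxY
        omega
      · have := hbB Y hY x hxY
        omega

theorem isDecStair_append_singleton {l : List ℕ} {v : ℕ} (hnd : (l ++ [v]).Nodup)
    (hv : ∀ x ∈ l, v < x) (hl : (l ++ [v]).IsChain (fun a b => a ≤ b + 1)) :
    IsDecStair (l ++ [v]) := by
  induction l with
  | nil => exact isChain_singleton v
  | cons a l ih =>
    have hs : IsDecStair (l ++ [v]) :=
      ih hnd.of_cons (fun x hx => hv x (mem_cons_of_mem _ hx)) hl.tail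
    have hva : v < a := hv a mem_cons_self
    have hvl : v ∈ l ++ [v] := mem_append_right _ (List.mem_singleton_self v)
    rw [cons_append] at hnd hl ⊢
    obtain ⟨b, t, hbt⟩ :=
      exists_cons_of_ne_nil (append_ne_nil_of_right_ne_nil l (cons_ne_nil v []))
    rw [hbt] at hs hnd hl hvl ⊢
    have hmem := hs.mem_cons_iff (x := a)
    have hvb := hs.mem_cons_iff.1 hvl
    have hab := (isChain_cons_cons.1 hl).1
    have ha := mt hmem.2 (nodup_cons.1 hnd).1
    exact isChain_cons_cons.2 ⟨by omega, hs⟩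

def IsType312 (L : List ℕ) : Prop :=
  ∃ w1 w2 : List ℕ, L = w1 ++ [3, 1, 2] ++ w2 ∧
    IsDecStair (w1 ++ [3]) ∧ IsIncStaircases w2

def IsType231 (L : List ℕ) : Prop :=
  ∃ w1 w2 : List ℕ, L = [2] ++ w1 ++ [3, 1] ++ w2 ∧
    IsDecStair (w1 ++ [3]) ∧ IsIncStaircases w2

lemma not_isType312_and_isType231 {L : List ℕ} (hnd : L.Nodup) :
    ¬ (IsType312 L ∧ IsType231 L) := by
  rintro ⟨⟨w1, w2, rfl, -⟩, ⟨v1, v2, hv, -⟩⟩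
  rcases w1 with _ | ⟨x, w1⟩
  · simp at hv
  · obtain ⟨rfl, -⟩ : x = 2 ∧ _ := by simpa using hv
    simp at hnd

/-- Without the letters `0` and `3`, a `2` can only be preceded by `1`, and then `1` by nothing. -/
lemma eq_two_cons_or_eq_one_two_cons {l : List ℕ} (hnd : l.Nodup)
    (hl : l.IsChain (fun a b => a ≤ b + 1)) (h0 : 0 ∉ l) (h3 : 3 ∉ l) (h2 : 2 ∈ l) :
    (∃ t, l = 2 :: t) ∨ ∃ t, l = 1 :: 2 :: t := by
  induction l with
  | nil => simp at h2
  | cons a l ih =>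
    obtain ⟨ha, hnd⟩ := nodup_cons.1 hnd
    rcases List.mem_cons.1 h2 with rfl | h2
    · exact Or.inl ⟨l, rfl⟩
    rcases ih hnd hl.tail (fun h => h0 (mem_cons_of_mem _ h)) (fun h => h3 (mem_cons_of_mem _ h)) h2
      with ⟨t, rfl⟩ | ⟨t, rfl⟩
    · have := (isChain_cons_cons.1 hl).1
      simp only [List.mem_cons, not_or] at h0 h3 ha
      exact Or.inr ⟨t, by congr; omega⟩
    · have := (isChain_cons_cons.1 hl).1
      simp only [List.mem_cons, not_or] at h0 ha
      omega

lemma isType312_or_isType231 {P S : List ℕ} (hnd : (P ++ 3 :: 1 :: S).Nodup)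
    (h0 : 0 ∉ P ++ 3 :: 1 :: S) (h2 : 2 ∈ P ++ 3 :: 1 :: S)
    (hP : (P ++ [3]).IsChain (fun a b => a ≤ b + 1))
    (hS : (1 :: S).IsChain (fun a b => a ≤ b + 1)) :
    IsType312 (P ++ 3 :: 1 :: S) ∨ IsType231 (P ++ 3 :: 1 :: S) := by
  rcases List.mem_append.1 h2 with h2 | h2
  · obtain ⟨t, rfl⟩ | ⟨t, rfl⟩ :=
      eq_two_cons_or_eq_one_two_cons hnd.of_append_left (hP.prefix (prefix_append _ _))
        (by simp_all) (by grind [List.nodup_append]) h2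
    · refine Or.inr ⟨t, S, by simp, isDecStair_append_singleton ?_ ?_ hP.tail,
        isIncStaircases_of_isChain ?_ hS.tail⟩
      all_goals grind [List.nodup_append]
    · simp at hnd
  · obtain ⟨t, ht⟩ | ⟨t, ht⟩ :=
      eq_two_cons_or_eq_one_two_cons hnd.of_append_right.of_cons hS
      (by simp_all) (by grind [List.nodup_append]) (by simp_all)
    · simp at ht
    · obtain rfl : S = 2 :: t := by simpa using ht
      refine Or.inl ⟨P, t, by simp, isDecStair_append_singleton ?_ ?_ hP,
        isIncStaircases_of_isChain ?_ hS.tail.tail⟩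
      all_goals grind [List.nodup_append]

theorem xor_isType312_isType231 {n : ℕ} {L : List ℕ} (hnd : L.Nodup)
    (hmem : ∀ x, x ∈ L ↔ 1 ≤ x ∧ x ≤ n)
    (h334 : L.IsChain (fun a b => a ≤ b + 1 ∨ a = 3 ∧ b = 1))
    (hPet : ¬ L.IsChain (fun a b => a ≤ b + 1)) : Xor (IsType312 L) (IsType231 L) := by
  obtain ⟨a, b, P, S, rfl, hab⟩ : ∃ a b P S, L = P ++ a :: b :: S ∧ ¬ a ≤ b + 1 := by
    simpa [isChain_iff_forall_rel_of_append_cons_cons] using hPet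
  obtain ⟨rfl, rfl⟩ : a = 3 ∧ b = 1 :=
    (isChain_iff_forall_rel_of_append_cons_cons.1 h334 rfl).resolve_left hab
  obtain ⟨hP, hS⟩ : (P ++ [3]).IsChain _ ∧ (1 :: S).IsChain _ := by
    simpa using h334
  have h3 : 3 ≤ n := ((hmem 3).1 (by simp)).2
  rw [xor_iff_or_and_not_and]
  refine ⟨isType312_or_isType231 hnd (fun h => by simpa using (hmem 0).1 h)
    ((hmem 2).2 ⟨by omega, by omega⟩) (hP.imp_of_mem_imp ?_) (hS.imp_of_mem_imp ?_),
    not_isType312_and_isType231 hnd⟩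
  · rintro x y - hy (h | ⟨rfl, rfl⟩)
    · exact h
    · grind [List.nodup_append]
  · rintro x y hx - (h | ⟨rfl, rfl⟩)
    · exact h
    · grind [List.nodup_append]

lemma mem_oneLine {n x : ℕ} {w : Perm (Fin n)} : x ∈ oneLine n w ↔ 1 ≤ x ∧ x ≤ n := by
  simp only [oneLine, List.mem_ofFn]
  constructor
  · rintro ⟨i, rfl⟩
    omega
  · intro hx
    exact ⟨w.symm ⟨x - 1, by omega⟩, by rw [w.apply_symm_apply, Fin.val_mk]; omega⟩

lemma nodup_oneLine {n : ℕ} (w : Perm (Fin n)) : (oneLine n w).Nodup :=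
  List.nodup_ofFn.2 fun i j h => w.injective (Fin.ext (by simpa using h))

lemma isPermissible_iff_isChain {n : ℕ} {h : ℕ → ℕ} {w : Perm (Fin n)} :
    IsPermissible n h w ↔ (oneLine n w).IsChain (fun k j => k ≤ h j) := by
  simp only [List.isChain_iff_getElem, oneLine, List.length_ofFn, List.getElem_ofFn]
  exact ⟨fun hw i hi => hw ⟨i, by omega⟩ hi, fun hw i hi => hw i hi⟩

lemma le_h334_iff {n j k : ℕ} (hk : k ≤ n) (hj : 1 ≤ j) :
    k ≤ h334 n j ↔ k ≤ j + 1 ∨ k = 3 ∧ j = 1 := by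
  unfold h334
  split <;> omega

lemma le_hPet_iff {n j k : ℕ} (hk : k ≤ n) : k ≤ hPet n j ↔ k ≤ j + 1 := by
  unfold hPet
  omega

theorem stmt7_general (n : ℕ) (w : Equiv.Perm (Fin n))
    (hperm : IsPermissible n (h334 n) w) (hnot : ¬ IsPermissible n (hPet n) w) :
    Xor'
      (∃ w1 w2 : List ℕ, oneLine n w = w1 ++ [3, 1, 2] ++ w2 ∧
        IsDecStair (w1 ++ [3]) ∧ IsIncStaircases w2)
      (∃ w1 w2 : List ℕ, oneLine n w = [2] ++ w1 ++ [3, 1] ++ w2 ∧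
        IsDecStair (w1 ++ [3]) ∧ IsIncStaircases w2) := by
  have hmem : ∀ x, x ∈ oneLine n w ↔ 1 ≤ x ∧ x ≤ n := fun _ => mem_oneLine
  rw [isPermissible_iff_isChain] at hperm hnot
  refine xor_isType312_isType231 (nodup_oneLine w) hmem
    (hperm.imp_of_mem_imp fun k j hk hj => (le_h334_iff ((hmem k).1 hk).2 ((hmem j).1 hj).1).1)
    fun h => hnot (h.imp_of_mem_imp fun k j hk _ => (le_hPet_iff ((hmem k).1 hk).2).2)

/-- For the 334-type Hessenberg function, every permissible filling which is not
Peterson-permissible is of exactly one of the two forms: `w' 3 1 2 w''`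
(312-type) or `2 w' 3 1 w''` (231-type), where `w'` is a possibly empty
decreasing staircase such that `w' 3` is a staircase and `w''` is an increasing
sequence of staircases. -/
theorem stmt7 (n : ℕ) (hn : 4 ≤ n) (w : Equiv.Perm (Fin n))
    (hperm : IsPermissible n (h334 n) w) (hnot : ¬ IsPermissible n (hPet n) w) :
    Xor'
      (∃ w1 w2 : List ℕ, oneLine n w = w1 ++ [3, 1, 2] ++ w2 ∧
        IsDecStair (w1 ++ [3]) ∧ IsIncStaircases w2)
      (∃ w1 w2 : List ℕ, oneLine n w = [2] ++ w1 ++ [3, 1] ++ w2 ∧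
        IsDecStair (w1 ++ [3]) ∧ IsIncStaircases w2) :=
  stmt7_general n w hperm hnot
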